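/- arXiv:quant-ph/0307189 — 3 statements merged into one kernel-verified Lean document; each statement's English description precedes it below -/
import Mathlib

section
/- There exist no random variables X₁, X₂, Y₁, Y₂ on a common probability space, each taking values in {-1,+1}, such that P(X₁=Y₁) = 1 and P(X₁=Y₂) = P(X₂=Y₂) = P(X₂=Y₁) = 1/4. -/
/-!
Every outcome ω either has X₁ ω ≠ Y₁ ω or lies in one of the events X₁ = Y₂, X₂ = Y₂,
X₂ = Y₁: if X₁ ω disagrees with Y₂ ω and X₂ ω disagrees with Y₂ ω, then two-valuedness forces
X₂ ω = X₁ ω = Y₁ ω. The union bound then gives 1 ≤ 1/4 + 1/4 + 1/4 + 0.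
-/

open MeasureTheory Set

theorem eq_of_ne_of_ne_of_two_valued {α : Type*} {a b x y z : α}
    (hx : x = a ∨ x = b) (hy : y = a ∨ y = b) (hz : z = a ∨ z = b)
    (hxy : x ≠ y) (hzy : z ≠ y) : x = z := by
  rcases hx with rfl | rfl <;> rcases hy with rfl | rfl <;> rcases hz with rfl | rfl <;>
    simp_all

section TwoValued

variable {Ω α : Type*} {a b : α} {X₁ X₂ Y₂ : Ω → α}

theorem univ_subset_of_two_valued (Y₁ : Ω → α)
    (hX₁ : ∀ ω, X₁ ω = a ∨ X₁ ω = b) (hX₂ : ∀ ω, X₂ ω = a ∨ X₂ ω = b)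
    (hY₂ : ∀ ω, Y₂ ω = a ∨ Y₂ ω = b) :
    univ ⊆ {ω | X₁ ω = Y₂ ω} ∪ {ω | X₂ ω = Y₂ ω} ∪ {ω | X₂ ω = Y₁ ω} ∪ {ω | X₁ ω ≠ Y₁ ω} := by
  intro ω _
  by_cases h₁₂ : X₁ ω = Y₂ ω
  · exact Or.inl (Or.inl (Or.inl h₁₂))
  by_cases h₂₂ : X₂ ω = Y₂ ω
  · exact Or.inl (Or.inl (Or.inr h₂₂))
  have hX₁X₂ : X₁ ω = X₂ ω := eq_of_ne_of_ne_of_two_valued (hX₁ ω) (hY₂ ω) (hX₂ ω) h₁₂ h₂₂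
  by_cases h₁₁ : X₁ ω = Y₁ ω
  · exact Or.inl (Or.inr (hX₁X₂.symm.trans h₁₁))
  · exact Or.inr h₁₁

theorem measure_univ_le_of_two_valued [MeasurableSpace Ω] (μ : Measure Ω) (Y₁ : Ω → α)
    (hX₁ : ∀ ω, X₁ ω = a ∨ X₁ ω = b) (hX₂ : ∀ ω, X₂ ω = a ∨ X₂ ω = b)
    (hY₂ : ∀ ω, Y₂ ω = a ∨ Y₂ ω = b) :
    μ univ ≤ μ {ω | X₁ ω = Y₂ ω} + μ {ω | X₂ ω = Y₂ ω} + μ {ω | X₂ ω = Y₁ ω} +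
      μ {ω | X₁ ω ≠ Y₁ ω} := by
  refine (measure_mono (univ_subset_of_two_valued Y₁ hX₁ hX₂ hY₂)).trans ?_
  refine (measure_union_le _ _).trans (add_le_add_left ?_ _)
  refine (measure_union_le _ _).trans (add_le_add_left ?_ _)
  exact measure_union_le _ _

end TwoValued

theorem no_local_hidden_variables :
    ¬ ∃ (Ω : Type) (_ : MeasurableSpace Ω) (μ : Measure Ω)
        (_ : IsProbabilityMeasure μ) (X₁ X₂ Y₁ Y₂ : Ω → ℝ),
      Measurable X₁ ∧ Measurable X₂ ∧ Measurable Y₁ ∧ Measurable Y₂ ∧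
      (∀ ω, X₁ ω = -1 ∨ X₁ ω = 1) ∧ (∀ ω, X₂ ω = -1 ∨ X₂ ω = 1) ∧
      (∀ ω, Y₁ ω = -1 ∨ Y₁ ω = 1) ∧ (∀ ω, Y₂ ω = -1 ∨ Y₂ ω = 1) ∧
      μ {ω | X₁ ω = Y₁ ω} = 1 ∧
      μ {ω | X₁ ω = Y₂ ω} = 1 / 4 ∧
      μ {ω | X₂ ω = Y₂ ω} = 1 / 4 ∧
      μ {ω | X₂ ω = Y₁ ω} = 1 / 4 := by
  rintro ⟨Ω, _, μ, _, X₁, X₂, Y₁, Y₂, hmX₁, -, hmY₁, -, hX₁, hX₂, -, hY₂, h₁₁, h₁₂, h₂₂, h₂₁⟩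
  have h₁₁_compl : μ {ω | X₁ ω ≠ Y₁ ω} = 0 :=
    (prob_compl_eq_zero_iff (measurableSet_eq_fun hmX₁ hmY₁)).2 h₁₁
  have hbound := measure_univ_le_of_two_valued μ Y₁ hX₁ hX₂ hY₂
  rw [measure_univ, h₁₂, h₂₂, h₂₁, h₁₁_compl, add_zero] at hbound
  have hlt : (1 / 4 + 1 / 4 + 1 / 4 : ENNReal) < 1 := by
    rw [ENNReal.div_add_div_same, ENNReal.div_add_div_same,
      ENNReal.div_lt_iff (by norm_num) (by norm_num)]
    norm_num
  exact hlt.not_ge hbound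
end

section
/- Under the hypotheses of the previous statement, if additionally ρ and L are twice (respectively once more) differentiable, then tr(ρ(θ) L(θ)²) = -tr(ρ(θ) L'(θ)); that is, the expected quantum information I(θ) = tr(ρ L²) equals the expectation of the observable quantum information J(θ) = -L'(θ). -/
open Matrix

/-!
The trace of `ρ` is constant, so `0 = tr ρ' = tr (ρ L)`. Differentiating this identity gives
`0 = tr (ρ' L) + tr (ρ L')`, and the SLD equation together with cyclicity of the trace turns
`tr (ρ' L)` into `tr (ρ L²)`.
-/

section Calculus

variable {𝕜 𝔸 : Type*} [NontriviallyNormedField 𝕜] [NormedRing 𝔸] [NormedAlgebra 𝕜 𝔸]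
  {n : Type*} [Fintype n]

theorem Matrix.hasDerivAt_trace {A A' : 𝕜 → Matrix n n 𝔸} {x : 𝕜}
    (hA : ∀ i j, HasDerivAt (fun t => A t i j) (A' x i j) x) :
    HasDerivAt (fun t => (A t).trace) (A' x).trace x := by
  simpa only [trace, diag] using HasDerivAt.fun_sum fun i _ => hA i i

theorem Matrix.hasDerivAt_trace_mul {A A' B B' : 𝕜 → Matrix n n 𝔸} {x : 𝕜}
    (hA : ∀ i j, HasDerivAt (fun t => A t i j) (A' x i j) x)
    (hB : ∀ i j, HasDerivAt (fun t => B t i j) (B' x i j) x) :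
    HasDerivAt (fun t => (A t * B t).trace) ((A' x * B x).trace + (A x * B' x).trace) x := by
  have hsum : HasDerivAt (fun t => ∑ i, ∑ j, A t i j * B t j i)
      (∑ i, ∑ j, (A' x i j * B x j i + A x i j * B' x j i)) x :=
    HasDerivAt.fun_sum fun i _ => HasDerivAt.fun_sum fun j _ => (hA i j).mul (hB j i)
  simpa only [trace, diag, mul_apply, Finset.sum_add_distrib] using hsum

end Calculus

theorem HasDerivAt.eq_zero_of_forall_eq {𝕜 F : Type*} [NontriviallyNormedField 𝕜]
    [NormedAddCommGroup F] [NormedSpace 𝕜 F] {f : 𝕜 → F} {f' c : F} {x : 𝕜}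
    (hf : HasDerivAt f f' x) (hc : ∀ t, f t = c) : f' = 0 :=
  hf.unique (funext hc ▸ hasDerivAt_const x c)

theorem Matrix.trace_symmetrizedProduct_mul {K n : Type*} [Field K] [NeZero (2 : K)]
    [Fintype n] (ρ L M : Matrix n n K) (hLM : Commute L M) :
    (((1 / 2 : K) • (ρ * L + L * ρ)) * M).trace = (ρ * (L * M)).trace := by
  have hcycle : (L * ρ * M).trace = (ρ * (L * M)).trace := by
    rw [mul_assoc, trace_mul_comm, mul_assoc, hLM.eq]
  rw [smul_mul, trace_smul, add_mul, trace_add, hcycle, mul_assoc, smul_eq_mul, ← two_mul,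
    ← mul_assoc, one_div, inv_mul_cancel₀ two_ne_zero, one_mul]

theorem expected_equals_observable_quantum_information_general {d : ℕ}
    (ρ ρd L Ld : ℝ → Matrix (Fin d) (Fin d) ℂ)
    (hρderiv : ∀ θ i j, HasDerivAt (fun t => ρ t i j) (ρd θ i j) θ)
    (hLderiv : ∀ θ i j, HasDerivAt (fun t => L t i j) (Ld θ i j) θ)
    (htr : ∀ θ, (ρ θ).trace = 1)
    (hsld : ∀ θ, ρd θ = (1 / 2 : ℂ) • (ρ θ * L θ + L θ * ρ θ)) :
    ∀ θ, (ρ θ * (L θ * L θ)).trace = -(ρ θ * Ld θ).trace := by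
  have hρL : ∀ θ, (ρ θ * L θ).trace = 0 := fun θ => by
    have hρd : (ρd θ).trace = 0 := (hasDerivAt_trace (hρderiv θ)).eq_zero_of_forall_eq htr
    rwa [hsld θ, ← mul_one (_ • _), trace_symmetrizedProduct_mul _ _ _ (Commute.one_right _),
      mul_one] at hρd
  intro θ
  have hsum : (ρd θ * L θ).trace + (ρ θ * Ld θ).trace = 0 :=
    (hasDerivAt_trace_mul (hρderiv θ) (hLderiv θ)).eq_zero_of_forall_eq hρL
  rw [hsld θ, trace_symmetrizedProduct_mul _ _ _ (Commute.refl _)] at hsum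
  exact eq_neg_of_add_eq_zero_left hsum

theorem expected_equals_observable_quantum_information {d : ℕ}
    (ρ ρd L Ld : ℝ → Matrix (Fin d) (Fin d) ℂ)
    (hρderiv : ∀ θ i j, HasDerivAt (fun t => ρ t i j) (ρd θ i j) θ)
    (hLderiv : ∀ θ i j, HasDerivAt (fun t => L t i j) (Ld θ i j) θ)
    (hherm : ∀ θ, (ρ θ).IsHermitian) (hL : ∀ θ, (L θ).IsHermitian)
    (htr : ∀ θ, (ρ θ).trace = 1)
    (hsld : ∀ θ, ρd θ = (1 / 2 : ℂ) • (ρ θ * L θ + L θ * ρ θ)) :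
    ∀ θ, (ρ θ * (L θ * L θ)).trace = -(ρ θ * Ld θ).trace :=
  expected_equals_observable_quantum_information_general ρ ρd L Ld hρderiv hLderiv htr hsld
end

section
/- (Finite-outcome Braunstein–Caves inequality) Let ρ be a d×d density matrix with symmetric logarithmic derivative L (Hermitian, with ρ' = (1/2)(ρL+Lρ)), and let m₁,…,m_n be positive semidefinite Hermitian matrices summing to the identity. Set p_k = tr(ρ m_k) and ṗ_k = tr(ρ' m_k). Then Σ_{k : p_k > 0} ṗ_k² / p_k ≤ tr(L ρ L), i.e., the classical Fisher information of the measurement is bounded by the quantum Fisher information tr(ρ L²). -/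
open Matrix
open scoped ComplexOrder

/-! Write `ρ = Bᴴ B`. For a positive semidefinite `M`, `⟪X, Y⟫ = tr (Y M Xᴴ)` is a semi-inner
product on matrices, and `ṗ = Re tr (ρ L M) = Re ⟪B, B L⟫`, `p = ⟪B, B⟫`,
`tr (L ρ L M) = ⟪B L, B L⟫`. Cauchy–Schwarz gives `ṗ_k² ≤ p_k tr (L ρ L m_k)`; dividing by `p_k`
and summing, the terms with `p_k = 0` are nonnegative and `∑ m_k = 1` turns the sum into
`tr (L ρ L)`. -/

namespace Matrix

variable {ι 𝕜 : Type*} [Fintype ι] [RCLike 𝕜]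

open RCLike

open scoped MatrixOrder in
theorem PosSemidef.sq_re_trace_mul_le {ρ L M : Matrix ι ι 𝕜} (hρ : ρ.PosSemidef)
    (hL : L.IsHermitian) (hM : M.PosSemidef) :
    re (ρ * L * M).trace ^ 2 ≤ re (ρ * M).trace * re (L * ρ * L * M).trace := by
  classical
  obtain ⟨B, rfl⟩ := CStarAlgebra.nonneg_iff_eq_star_mul_self.mp hρ.nonneg
  let := M.toMatrixSeminormedAddCommGroup hM
  let := M.toMatrixInnerProductSpace hM
  have inner_eq (X Y : Matrix ι ι 𝕜) : inner 𝕜 X Y = (Y * M * Xᴴ).trace := rfl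
  have hBL : inner 𝕜 B (B * L) = (star B * B * L * M).trace := by
    rw [inner_eq, trace_mul_comm, star_eq_conjTranspose]; simp only [Matrix.mul_assoc]
  have hB : inner 𝕜 B B = (star B * B * M).trace := by
    rw [inner_eq, trace_mul_comm, star_eq_conjTranspose]; simp only [Matrix.mul_assoc]
  have hLBL : inner 𝕜 (B * L) (B * L) = (L * (star B * B) * L * M).trace := by
    rw [inner_eq, conjTranspose_mul, hL.eq, trace_mul_comm, star_eq_conjTranspose]
    simp only [Matrix.mul_assoc]
  calc re (star B * B * L * M).trace ^ 2
      ≤ ‖inner 𝕜 B (B * L)‖ ^ 2 := by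
        rw [hBL, ← sq_abs]; exact pow_le_pow_left₀ (abs_nonneg _) (abs_re_le_norm _) 2
    _ = ‖inner 𝕜 B (B * L)‖ * ‖inner 𝕜 (B * L) B‖ := by rw [← inner_conj_symm, norm_conj, sq]
    _ ≤ re (inner 𝕜 B B) * re (inner 𝕜 (B * L) (B * L)) := inner_mul_inner_self_le _ _
    _ = _ := by rw [hB, hLBL]

theorem PosSemidef.re_trace_mul_nonneg {P M : Matrix ι ι 𝕜} (hP : P.PosSemidef)
    (hM : M.PosSemidef) : 0 ≤ re (P * M).trace := by
  classical
  open scoped MatrixOrder in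
  obtain ⟨B, rfl⟩ := CStarAlgebra.nonneg_iff_eq_star_mul_self.mp hP.nonneg
  rw [Matrix.mul_assoc, trace_mul_comm, star_eq_conjTranspose]
  exact (nonneg_iff.mp (hM.mul_mul_conjTranspose_same B).trace_nonneg).1

theorem IsHermitian.re_trace_half_anticommutator_mul {ρ L M : Matrix ι ι 𝕜} (hρ : ρ.IsHermitian)
    (hL : L.IsHermitian) (hM : M.IsHermitian) :
    re (((1 / 2 : 𝕜) • (ρ * L + L * ρ)) * M).trace = re (ρ * L * M).trace := by
  have hconj : (L * ρ * M).trace = star (ρ * L * M).trace := by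
    rw [← trace_conjTranspose, conjTranspose_mul, conjTranspose_mul, hρ.eq, hL.eq, hM.eq,
      trace_mul_comm]
  rw [smul_mul, trace_smul, add_mul, trace_add, hconj, star_def, add_conj]
  simp

end Matrix

theorem braunstein_caves_information_bound_general {d n : ℕ}
    (ρ ρd L : Matrix (Fin d) (Fin d) ℂ)
    (hρ : ρ.PosSemidef)
    (hL : L.IsHermitian)
    (hsld : ρd = (1 / 2 : ℂ) • (ρ * L + L * ρ))
    (m : Fin n → Matrix (Fin d) (Fin d) ℂ)
    (hm : ∀ k, (m k).PosSemidef)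
    (hsum : ∑ k, m k = 1) :
    ∑ k ∈ Finset.univ.filter (fun k => 0 < (ρ * m k).trace.re),
        ((ρd * m k).trace.re) ^ 2 / (ρ * m k).trace.re ≤
      (L * ρ * L).trace.re := by
  have hLρL : (L * ρ * L).PosSemidef := by
    simpa [hL.eq] using hρ.conjTranspose_mul_mul_same L
  calc ∑ k ∈ Finset.univ.filter (fun k => 0 < (ρ * m k).trace.re),
        ((ρd * m k).trace.re) ^ 2 / (ρ * m k).trace.re
      ≤ ∑ k ∈ Finset.univ.filter (fun k => 0 < (ρ * m k).trace.re),
          (L * ρ * L * m k).trace.re := by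
        refine Finset.sum_le_sum fun k hk => ?_
        have hre : (ρd * m k).trace.re = (ρ * L * m k).trace.re :=
          hsld ▸ hρ.isHermitian.re_trace_half_anticommutator_mul hL (hm k).isHermitian
        rw [div_le_iff₀' (Finset.mem_filter.mp hk).2, hre]
        exact hρ.sq_re_trace_mul_le hL (hm k)
    _ ≤ ∑ k, (L * ρ * L * m k).trace.re :=
        Finset.sum_le_sum_of_subset_of_nonneg (Finset.filter_subset _ _)
          fun k _ _ => hLρL.re_trace_mul_nonneg (hm k)
    _ = (L * ρ * L).trace.re := by
        rw [← Complex.re_sum, ← trace_sum, ← Finset.mul_sum, hsum, mul_one]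

theorem braunstein_caves_information_bound {d n : ℕ}
    (ρ ρd L : Matrix (Fin d) (Fin d) ℂ)
    (hρ : ρ.PosSemidef) (htr : ρ.trace = 1)
    (hL : L.IsHermitian)
    (hsld : ρd = (1 / 2 : ℂ) • (ρ * L + L * ρ))
    (m : Fin n → Matrix (Fin d) (Fin d) ℂ)
    (hm : ∀ k, (m k).PosSemidef)
    (hsum : ∑ k, m k = 1) :
    ∑ k ∈ Finset.univ.filter (fun k => 0 < (ρ * m k).trace.re),
        ((ρd * m k).trace.re) ^ 2 / (ρ * m k).trace.re ≤
      (L * ρ * L).trace.re :=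
  braunstein_caves_information_bound_general ρ ρd L hρ hL hsld m hm hsum
end
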